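/- Suppose (f, w) is a point of the polytope Q such that f_i^{(α)} ∈ {0,1} for all i ∈ {1,…,n} and α ∈ R⁻, and let c ∈ Rⁿ be such that for all i and all α ∈ R⁻: f_i^{(α)} = 1 if and only if c_i = α. Then for every j ∈ J: X_j(c) ∈ E_j, w_{j,X_j(c)} = 1, and w_{j,S} = 0 for every S ∈ E_j with S ≠ X_j(c). -/

import Mathlib

/-!
Each `f_i^{(α)}` with `i ∈ supp(H_j)` is the `w_j`-weight of the tuples `S ∈ E_j` with `i ∈ S_α`.
Since `w_j` is a probability vector, the value `0` or `1` of that weight forces every `S` in the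
support of `w_j` to satisfy `i ∈ S_α ↔ c_i = α`. For `α ≠ 0` this pins down `S_α = X_j(c)_α`, and
`S_0` is determined by the other components, so the support of `w_j` is `{X_j(c)}`.
-/

open Finset

/-- The tuple of sets `X_j(c)`: for each symbol `α`, the set of positions `i` in the
support of the `j`-th row of `H` where `c i = α`. -/
def Xj {R : Type} [Ring R] [DecidableEq R] {n m : ℕ} (H : Fin m → Fin n → R) (j : Fin m)
    (c : Fin n → R) : R → Finset (Fin n) :=
  fun α => univ.filter (fun i => H j i ≠ 0 ∧ c i = α)

/-- The set `E_j` of all tuples `X_j(c)` arising from words `c` satisfying parity check `j`. -/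
def Ej {R : Type} [Ring R] [Fintype R] [DecidableEq R] {n m : ℕ} (H : Fin m → Fin n → R)
    (j : Fin m) : Finset (R → Finset (Fin n)) :=
  (univ.filter (fun c : Fin n → R => ∑ i, H j i * c i = 0)).image (Xj H j)

/-- Membership in the relaxed LP polytope `Q`. -/
def MemQ {R : Type} [Ring R] [Fintype R] [DecidableEq R] {n m : ℕ} (H : Fin m → Fin n → R)
    (f : Fin n → R → ℝ) (w : Fin m → (R → Finset (Fin n)) → ℝ) : Prop :=
  (∀ j : Fin m, ∀ S ∈ Ej H j, 0 ≤ w j S ∧ w j S ≤ 1) ∧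
  (∀ j : Fin m, ∑ S ∈ Ej H j, w j S = 1) ∧
  (∀ j : Fin m, ∀ i : Fin n, H j i ≠ 0 → ∀ α : R, α ≠ 0 →
    f i α = ∑ S ∈ (Ej H j).filter (fun S => i ∈ S α), w j S)

/-- LP pseudocodeword: nonnegative integer vectors `(h, z)` satisfying the defining equations. -/
def IsLPPseudocodeword {R : Type} [Ring R] [Fintype R] [DecidableEq R] {n m : ℕ}
    (H : Fin m → Fin n → R) (h : Fin n → R → ℤ)
    (z : Fin m → (R → Finset (Fin n)) → ℤ) : Prop :=
  (∀ i α, 0 ≤ h i α) ∧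
  (∀ j : Fin m, ∀ S ∈ Ej H j, 0 ≤ z j S) ∧
  (∀ j : Fin m, ∀ i : Fin n, H j i ≠ 0 →
    (∀ α : R, α ≠ 0 → h i α = ∑ S ∈ (Ej H j).filter (fun S => i ∈ S α), z j S) ∧
    h i 0 = ∑ S ∈ (Ej H j).filter (fun S => ∀ α : R, α ≠ 0 → i ∉ S α), z j S)

/-- The embedding of a word `c ∈ Rⁿ` as the point `(ξ(c₁) | … | ξ(c_n))`
(indicator coordinates for the nonzero symbols). -/
def xiEmb {R : Type} [Zero R] [DecidableEq R] {n : ℕ} (c : Fin n → R) : Fin n → R → ℝ :=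
  fun i α => if α ≠ 0 ∧ c i = α then 1 else 0

/-- The linear cost function `λ · fᵀ = ∑_i ∑_{α ∈ R⁻} λ_i^{(α)} f_i^{(α)}`. -/
def costQ {R : Type} [Zero R] [Fintype R] [DecidableEq R] {n : ℕ}
    (lam f : Fin n → R → ℝ) : ℝ :=
  ∑ i, ∑ α ∈ univ.filter (fun α : R => α ≠ 0), lam i α * f i α

/-- Connectedness of the Tanner graph of `H`: the bipartite graph on
`{u_1,…,u_n} ∪ {v_1,…,v_m}` with `u_i ~ v_j` iff `H j i ≠ 0`. -/
def TannerConnected {R : Type} [Zero R] {n m : ℕ} (H : Fin m → Fin n → R) : Prop :=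
  (SimpleGraph.fromRel (fun x y : Fin n ⊕ Fin m =>
      ∃ i j, x = Sum.inl i ∧ y = Sum.inr j ∧ H j i ≠ 0)).Connected

/-- Graph-cover pseudocodeword for the `M`-cover specified by permutations `σ`. -/
def IsGCPseudocodeword {R : Type} [Ring R] [DecidableEq R] {n m : ℕ}
    (H : Fin m → Fin n → R) (M : ℕ) (σ : Fin m → Fin n → Equiv.Perm (Fin M))
    (p : Fin n → Fin M → R) : Prop :=
  ∀ (j : Fin m) (ℓ : Fin M),
    ∑ i ∈ univ.filter (fun i => H j i ≠ 0), H j i * p i (σ j i ℓ) = 0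
lemma mem_Xj_iff {R : Type} [Ring R] [DecidableEq R] {n m : ℕ} {H : Fin m → Fin n → R}
    {j : Fin m} {c : Fin n → R} {α : R} {i : Fin n} :
    i ∈ Xj H j c α ↔ H j i ≠ 0 ∧ c i = α := by
  simp [Xj]

lemma mem_Xj_zero_iff {R : Type} [Ring R] [DecidableEq R] {n m : ℕ} {H : Fin m → Fin n → R}
    {j : Fin m} {c : Fin n → R} {i : Fin n} :
    i ∈ Xj H j c 0 ↔ H j i ≠ 0 ∧ ∀ α : R, α ≠ 0 → i ∉ Xj H j c α := by
  simp only [mem_Xj_iff, not_and]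
  constructor
  · rintro ⟨hi, hci⟩
    exact ⟨hi, fun α hα _ hcα => hα (hcα ▸ hci)⟩
  · rintro ⟨hi, hnone⟩
    exact ⟨hi, by_contra fun hci => hnone (c i) hci hi rfl⟩

lemma Xj_eq_of_forall_ne_zero {R : Type} [Ring R] [DecidableEq R] {n m : ℕ}
    {H : Fin m → Fin n → R} {j : Fin m} {c c' : Fin n → R}
    (h : ∀ α : R, α ≠ 0 → Xj H j c α = Xj H j c' α) : Xj H j c = Xj H j c' := by
  funext α
  by_cases hα : α = 0
  · subst hα
    ext i
    simp only [mem_Xj_zero_iff]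
    exact and_congr_right fun _ => forall₂_congr fun α hα => by rw [h α hα]
  · exact h α hα

section ConvexCombination

variable {ι : Type*} {s : Finset ι} {w : ι → ℝ} {p : ι → Prop} [DecidablePred p]

lemma not_of_sum_filter_eq_zero (hw : ∀ x ∈ s, 0 ≤ w x) (h : ∑ x ∈ s with p x, w x = 0)
    {x : ι} (hx : x ∈ s) (hwx : w x ≠ 0) : ¬ p x := fun hpx =>
  hwx <| (sum_eq_zero_iff_of_nonneg fun y hy => hw y (mem_filter.mp hy).1).mp h x
    (mem_filter.mpr ⟨hx, hpx⟩)

lemma of_sum_filter_eq_one (hw : ∀ x ∈ s, 0 ≤ w x) (hsum : ∑ x ∈ s, w x = 1)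
    (h : ∑ x ∈ s with p x, w x = 1) {x : ι} (hx : x ∈ s) (hwx : w x ≠ 0) : p x := by
  have hnot : ∑ x ∈ s with ¬ p x, w x = 0 := by
    linarith [sum_filter_add_sum_filter_not s p w]
  exact not_not.mp (not_of_sum_filter_eq_zero hw hnot hx hwx)

lemma iff_sum_filter_eq_one (hw : ∀ x ∈ s, 0 ≤ w x) (hsum : ∑ x ∈ s, w x = 1)
    (h01 : ∑ x ∈ s with p x, w x = 0 ∨ ∑ x ∈ s with p x, w x = 1)
    {x : ι} (hx : x ∈ s) (hwx : w x ≠ 0) : p x ↔ ∑ x ∈ s with p x, w x = 1 := by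
  rcases h01 with h0 | h1
  · simp [h0, not_of_sum_filter_eq_zero hw h0 hx hwx]
  · simp [h1, of_sum_filter_eq_one hw hsum h1 hx hwx]

end ConvexCombination

lemma mem_and_eq_one_of_support_subset_singleton {ι M : Type*} [AddCommMonoidWithOne M]
    [NeZero (1 : M)] {s : Finset ι} {w : ι → M} (hsum : ∑ x ∈ s, w x = 1) {a : ι}
    (ha : ∀ x ∈ s, w x ≠ 0 → x = a) :
    a ∈ s ∧ w a = 1 ∧ ∀ x ∈ s, x ≠ a → w x = 0 := by
  have hzero : ∀ x ∈ s, x ≠ a → w x = 0 := fun x hx hxa => by_contra (hxa ∘ ha x hx)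
  obtain ⟨x, hx, hwx⟩ := exists_ne_zero_of_sum_ne_zero (hsum ▸ one_ne_zero : ∑ x ∈ s, w x ≠ 0)
  have has : a ∈ s := ha x hx hwx ▸ hx
  exact ⟨has, by rwa [sum_eq_single_of_mem a has hzero] at hsum, hzero⟩

lemma eq_Xj_of_weight_ne_zero {R : Type} [Ring R] [Fintype R] [DecidableEq R] {n m : ℕ}
    {H : Fin m → Fin n → R} {f : Fin n → R → ℝ} {w : Fin m → (R → Finset (Fin n)) → ℝ}
    (hQ : MemQ H f w) (h01 : ∀ i : Fin n, ∀ α : R, α ≠ 0 → f i α = 0 ∨ f i α = 1)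
    {c : Fin n → R} (hc : ∀ i : Fin n, ∀ α : R, α ≠ 0 → (f i α = 1 ↔ c i = α))
    {j : Fin m} {S : R → Finset (Fin n)} (hS : S ∈ Ej H j) (hwS : w j S ≠ 0) :
    S = Xj H j c := by
  obtain ⟨hw01, hsum, hf⟩ := hQ
  obtain ⟨c', -, rfl⟩ := mem_image.mp hS
  refine Xj_eq_of_forall_ne_zero fun α hα => ?_
  ext i
  by_cases hi : H j i = 0
  · simp [mem_Xj_iff, hi]
  have hfα := hf j i hi α hα
  have hmem := iff_sum_filter_eq_one (p := fun S => i ∈ S α) (fun S hS => (hw01 j S hS).1)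
    (hsum j) (hfα ▸ h01 i α hα) hS hwS
  rw [hmem, ← hfα, hc i α hα, mem_Xj_iff]
  exact (and_iff_right hi).symm

/-- if `(f, w) ∈ Q` is `{0,1}`-valued and `c ∈ Rⁿ` satisfies
`f_i^{(α)} = 1 ↔ c_i = α` for all `α ∈ R⁻`, then for every `j`, `X_j(c) ∈ E_j`,
`w_{j,X_j(c)} = 1`, and `w_{j,S} = 0` for every other `S ∈ E_j`. -/
theorem stmt15 {R : Type} [Ring R] [Fintype R] [DecidableEq R] {n m : ℕ}
    (H : Fin m → Fin n → R)
    (f : Fin n → R → ℝ) (w : Fin m → (R → Finset (Fin n)) → ℝ)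
    (hQ : MemQ H f w)
    (h01 : ∀ i : Fin n, ∀ α : R, α ≠ 0 → f i α = 0 ∨ f i α = 1)
    (c : Fin n → R)
    (hc : ∀ i : Fin n, ∀ α : R, α ≠ 0 → (f i α = 1 ↔ c i = α)) :
    ∀ j : Fin m, Xj H j c ∈ Ej H j ∧ w j (Xj H j c) = 1 ∧
      ∀ S ∈ Ej H j, S ≠ Xj H j c → w j S = 0 := fun j =>
  mem_and_eq_one_of_support_subset_singleton (hQ.2.1 j) fun _ hS hwS =>
    eq_Xj_of_weight_ne_zero hQ h01 hc hS hwS
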